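/- arXiv:1202.3186 — 6 statements merged into one kernel-verified Lean document; each statement's English description precedes it below -/
import Mathlib

section
/- For all positive integers m ≠ n, the ordered pairs (⌊φm⌋, ⌊φm⌋ + m) and (⌊φn⌋ − 1, ⌊φn⌋ + n − 1) are distinct, where φ = (1+√5)/2. -/
noncomputable section

/-- The golden ratio. -/
def phi : ℝ := (1 + Real.sqrt 5) / 2

/-- For positive integers `m ≠ n` the pairs `(⌊φm⌋, ⌊φm⌋ + m)` and
`(⌊φn⌋ - 1, ⌊φn⌋ + n - 1)` are distinct. -/
theorem pairs_distinct (m n : ℕ) (hm : 0 < m) (hn : 0 < n) (hmn : m ≠ n) :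
    (⌊phi * m⌋₊, ⌊phi * m⌋₊ + m) ≠ (⌊phi * n⌋₊ - 1, ⌊phi * n⌋₊ + n - 1) := by
  intro h
  have h1 := congrArg Prod.fst h
  have h2 := congrArg Prod.snd h
  simp only at h1 h2
  have hphi : (1:ℝ) ≤ phi := by
    have : (1:ℝ) ≤ Real.sqrt 5 := by
      rw [show (1:ℝ) = Real.sqrt 1 by simp]
      exact Real.sqrt_le_sqrt (by norm_num)
    unfold phi; linarith
  have hfl : 1 ≤ ⌊phi * n⌋₊ := by
    apply Nat.le_floor; push_cast
    have : (1:ℝ) ≤ (n:ℝ) := by exact_mod_cast hn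
    nlinarith [mul_le_mul hphi this zero_le_one (by linarith : (0:ℝ) ≤ phi)]
  omega

end
end

section
/- Let C = {(⌊φn⌋ − 1, ⌊φn⌋ + n − 1) : n ≥ 1} where φ = (1+√5)/2. If (a,b) ∈ C with a ≤ b, then for every integer x ≥ 1, the pair (a, b − x) (with both coordinates ordered appropriately) is not in C. -/
noncomputable section

/-- The set `C = {(⌊φn⌋ - 1, ⌊φn⌋ + n - 1) : n ≥ 1}`. -/
def C : Set (ℕ × ℕ) :=
  {p | ∃ n : ℕ, 0 < n ∧ p = (⌊phi * n⌋₊ - 1, ⌊phi * n⌋₊ + n - 1)}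

/-! `C` is the set of losing positions of Wythoff's game, shifted by one. If the first coordinate
`a = ⌊φn⌋ - 1` is kept, the pair is pinned down because `n ↦ ⌊φn⌋` is injective; if instead `a`
becomes the second coordinate `⌊φm⌋ + m - 1 = ⌊(φ + 1)m⌋ - 1`, then `⌊φn⌋ = ⌊(φ + 1)m⌋`, which
Rayleigh's theorem forbids since `1/φ + 1/(φ + 1) = 1`. -/

theorem Nat.strictMono_floor_mul {r : ℝ} (hr : 1 ≤ r) : StrictMono fun n : ℕ ↦ ⌊r * n⌋₊ := by
  intro m n hmn
  have hmn' : (m : ℝ) + 1 ≤ n := by exact_mod_cast hmn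
  suffices (⌊r * m⌋₊ : ℝ) + 1 ≤ r * n by
    exact Nat.lt_of_succ_le (Nat.le_floor (by exact_mod_cast this))
  calc (⌊r * m⌋₊ : ℝ) + 1 ≤ r * m + r := by
        linarith [Nat.floor_le (by positivity : 0 ≤ r * m)]
    _ = r * (m + 1) := by ring
    _ ≤ r * n := mul_le_mul_of_nonneg_left hmn' (zero_le_one.trans hr)

theorem Nat.floor_add_one_mul {r : ℝ} (hr : 0 ≤ r) (n : ℕ) :
    ⌊(r + 1) * n⌋₊ = ⌊r * n⌋₊ + n := by
  rw [add_mul, one_mul, Nat.floor_add_natCast (by positivity)]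

theorem beattySeq_natCast {r : ℝ} (hr : 0 ≤ r) (n : ℕ) : beattySeq r n = ⌊r * n⌋₊ := by
  rw [beattySeq, Int.natCast_floor_eq_floor (by positivity), Int.cast_natCast, mul_comm]

theorem Irrational.natFloor_mul_ne_natFloor_mul {r s : ℝ} (hrs : r.HolderConjugate s)
    (hr : Irrational r) {m n : ℕ} (hm : 0 < m) (hn : 0 < n) : ⌊r * m⌋₊ ≠ ⌊s * n⌋₊ := by
  intro h
  have hpos : 0 < ⌊r * m⌋₊ :=
    Nat.floor_pos.2 (one_le_mul_of_one_le_of_one_le hrs.lt.le (by exact_mod_cast hm))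
  have hr_mem : (⌊r * m⌋₊ : ℤ) ∈ {beattySeq r k | k > 0} :=
    ⟨m, by exact_mod_cast hm, beattySeq_natCast hrs.nonneg m⟩
  have hs_mem : (⌊r * m⌋₊ : ℤ) ∈ {beattySeq s k | k > 0} :=
    ⟨n, by exact_mod_cast hn, by rw [h, beattySeq_natCast hrs.symm.nonneg n]⟩
  have hmem : (⌊r * m⌋₊ : ℤ) ∈ symmDiff {beattySeq r k | k > 0} {beattySeq s k | k > 0} := by
    rw [hr.beattySeq_symmDiff_beattySeq_pos hrs]
    exact Int.natCast_pos.2 hpos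
  rcases Set.mem_symmDiff.1 hmem with ⟨-, hs_nmem⟩ | ⟨-, hr_nmem⟩
  · exact hs_nmem hs_mem
  · exact hr_nmem hr_mem

theorem Real.holderConjugate_goldenRatio : goldenRatio.HolderConjugate (goldenRatio + 1) := by
  rw [Real.holderConjugate_iff]
  refine ⟨one_lt_goldenRatio, ?_⟩
  have hsq := goldenRatio_sq
  have h0 := goldenRatio_pos
  generalize goldenRatio = g at *
  have h1 : 0 < g + 1 := by linarith
  field_simp
  linear_combination -hsq

theorem not_mem_C_of_sub_larger_general (a b : ℕ) (hC : (a, b) ∈ C)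
    (x : ℕ) (hx : 1 ≤ x) :
    (a, b - x) ∉ C ∧ (b - x, a) ∉ C := by
  have hmono : StrictMono fun n : ℕ ↦ ⌊phi * n⌋₊ :=
    Nat.strictMono_floor_mul Real.one_lt_goldenRatio.le
  have hle (n : ℕ) : n ≤ ⌊phi * n⌋₊ := hmono.id_le n
  obtain ⟨n, hn, hab⟩ := hC
  simp only [Prod.mk.injEq] at hab
  have hn_le := hle n
  refine ⟨?_, ?_⟩
  · rintro ⟨m, hm, h⟩
    simp only [Prod.mk.injEq] at h
    have hm_le := hle m
    have hmn : m = n := hmono.injective (show ⌊phi * m⌋₊ = ⌊phi * n⌋₊ by omega)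
    subst hmn
    omega
  · rintro ⟨m, hm, h⟩
    simp only [Prod.mk.injEq] at h
    refine Real.goldenRatio_irrational.natFloor_mul_ne_natFloor_mul
      Real.holderConjugate_goldenRatio hn hm ?_
    rw [Nat.floor_add_one_mul Real.goldenRatio_pos.le]
    change ⌊phi * n⌋₊ = ⌊phi * m⌋₊ + m
    omega

/-- If `(a,b) ∈ C` with `a ≤ b` then for every `x ≥ 1` (with `b - x ≥ 0`),
neither `(a, b - x)` nor its swap lies in `C`. -/
theorem not_mem_C_of_sub_larger (a b : ℕ) (hC : (a, b) ∈ C) (hab : a ≤ b)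
    (x : ℕ) (hx : 1 ≤ x) (hxb : x ≤ b) :
    (a, b - x) ∉ C ∧ (b - x, a) ∉ C :=
  not_mem_C_of_sub_larger_general a b hC x hx

end
end

section
/- Let C = {(⌊φn⌋ − 1, ⌊φn⌋ + n − 1) : n ≥ 1} where φ = (1+√5)/2. If (a,b) ∈ C with a ≤ b, then for all integers x ≥ 1 and y ≥ 0 with x ≥ y, the pair (a − x, b − y) is not in C. -/
noncomputable section

lemma one_le_phi : (1 : ℝ) ≤ phi := by
  have h : (1:ℝ) ≤ Real.sqrt 5 := by
    rw [show (1:ℝ) = Real.sqrt 1 by simp]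
    exact Real.sqrt_le_sqrt (by norm_num)
  unfold phi; linarith

lemma le_floor_phi (n : ℕ) : n ≤ ⌊phi * n⌋₊ := by
  apply Nat.le_floor
  have h := mul_le_mul_of_nonneg_right one_le_phi (Nat.cast_nonneg (α := ℝ) n)
  simpa using h

lemma floor_phi_mono {m n : ℕ} (h : m ≤ n) : ⌊phi * m⌋₊ ≤ ⌊phi * n⌋₊ := by
  apply Nat.floor_le_floor
  have : (0:ℝ) ≤ phi := le_trans zero_le_one one_le_phi
  exact mul_le_mul_of_nonneg_left (by exact_mod_cast h) this

/-- If `(a,b) ∈ C` with `a ≤ b` then for all `x ≥ 1`, `y ≥ 0` with `x ≥ y`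
(and `a - x ≥ 0`), the pair `(a - x, b - y)` is not in `C`. -/
theorem not_mem_C_of_sub_both (a b : ℕ) (hC : (a, b) ∈ C) (hab : a ≤ b)
    (x y : ℕ) (hx : 1 ≤ x) (hyx : y ≤ x) (hxa : x ≤ a) :
    (a - x, b - y) ∉ C := by
  obtain ⟨n, hn, hab'⟩ := hC
  rintro ⟨m, hm, hab''⟩
  have hFn : n ≤ ⌊phi * n⌋₊ := le_floor_phi n
  have hFm : m ≤ ⌊phi * m⌋₊ := le_floor_phi m
  have ha : a = ⌊phi * n⌋₊ - 1 := (Prod.mk.injEq _ _ _ _ ▸ hab').1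
  have hb : b = ⌊phi * n⌋₊ + n - 1 := (Prod.mk.injEq _ _ _ _ ▸ hab').2
  have ha' : a - x = ⌊phi * m⌋₊ - 1 := (Prod.mk.injEq _ _ _ _ ▸ hab'').1
  have hb' : b - y = ⌊phi * m⌋₊ + m - 1 := (Prod.mk.injEq _ _ _ _ ▸ hab'').2
  -- first coordinates: ⌊φn⌋ = ⌊φm⌋ + x
  have h1 : ⌊phi * n⌋₊ = ⌊phi * m⌋₊ + x := by omega
  -- hence m < n
  have hmn : m < n := by
    by_contra h
    push_neg at h
    have := floor_phi_mono h
    omega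
  -- second coordinates
  have hy : y ≤ b := le_trans (le_trans hyx hxa) hab
  have h2 : ⌊phi * n⌋₊ + n = ⌊phi * m⌋₊ + m + y := by omega
  omega
end
end

section
/- In the game R-Wythoff, the set of P-positions is exactly A = {(⌊φn⌋, ⌊φn⌋ + n) : n ≥ 0} (up to swapping coordinates), where φ = (1+√5)/2. That is: (i) no legal move from a position in A lands in A, and (ii) from every position not in A there is a legal move into A. -/
noncomputable section

/-- Minimum excluded value of a set of naturals. -/
def mex (S : Set ℕ) : ℕ := sInf {n | n ∉ S}

/-- Sort a pair of naturals into nondecreasing order. -/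
def sortPair (p : ℕ × ℕ) : ℕ × ℕ := (min p.1 p.2, max p.1 p.2)

/-- Moves of R-Wythoff (positions are unordered pairs of pile sizes): remove a
positive number of tokens from the larger pile (either pile if equal), or an
equal positive number of tokens from both piles. -/
def RMove (p q : ℕ × ℕ) : Prop :=
  (∃ t < max p.1 p.2, sortPair q = sortPair (min p.1 p.2, t)) ∨
  (∃ k, 0 < k ∧ k ≤ min p.1 p.2 ∧ sortPair q = (min p.1 p.2 - k, max p.1 p.2 - k))

lemma RMove.sum_lt {p q : ℕ × ℕ} (h : RMove p q) : q.1 + q.2 < p.1 + p.2 := by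
  rcases h with ⟨t, ht, hq⟩ | ⟨k, hk0, hk, hq⟩ <;>
  · simp only [sortPair, Prod.mk.injEq] at hq
    omega

/-- Sprague–Grundy function of R-Wythoff. -/
noncomputable def grundyR : ℕ × ℕ → ℕ
  | p => mex {v | ∃ q, ∃ _ : RMove p q, grundyR q = v}
termination_by p => p.1 + p.2
decreasing_by exact RMove.sum_lt (by assumption)

/-- P-positions of R-Wythoff: a position is P iff every move leads to a
non-P (i.e. N) position. -/
def RPPos : ℕ × ℕ → Prop
  | p => ∀ q, RMove p q → ¬ RPPos q
termination_by p => p.1 + p.2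
decreasing_by exact RMove.sum_lt (by assumption)

/-! Rayleigh's theorem for `φ` and `φ + 1 = φ²`, whose reciprocals add up to `1`, is what makes
`⌊φn⌋` and `⌊φn⌋ + n` (`n ≥ 1`) partition the positive integers. Given that, the pairs
`(⌊φn⌋, ⌊φn⌋ + n)` have pairwise distinct entries and pairwise distinct differences `n`, so no move
joins two of them. From any other position `(x, x + d)`, compare `x` with `⌊φd⌋`: if `x` is larger,
slide diagonally to `(⌊φd⌋, ⌊φd⌋ + d)`; if it is smaller, `x` is an entry of some pair with
difference less than `d`, and shrinking the larger pile reaches that pair. -/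

lemma phi_pos : 0 < phi := Real.goldenRatio_pos

lemma one_lt_phi : 1 < phi := Real.one_lt_goldenRatio

lemma phi_holderConjugate : phi.HolderConjugate (phi + 1) := by
  have hsq : phi ^ 2 = phi + 1 := Real.goldenRatio_sq
  have hpos := phi_pos
  rw [Real.holderConjugate_iff]
  refine ⟨one_lt_phi, ?_⟩
  field_simp
  linear_combination -hsq

lemma mem_beattySeq_pos_iff {r : ℝ} (hr : 0 ≤ r) (j : ℕ) :
    (j : ℤ) ∈ {beattySeq r k | k > 0} ↔ ∃ n : ℕ, 0 < n ∧ ⌊n * r⌋₊ = j := by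
  constructor
  · rintro ⟨k, hk, hkj⟩
    lift k to ℕ using hk.le
    refine ⟨k, by exact_mod_cast hk, ?_⟩
    rw [beattySeq, Int.cast_natCast, ← Int.natCast_floor_eq_floor (by positivity)] at hkj
    exact_mod_cast hkj
  · rintro ⟨n, hn, hnj⟩
    refine ⟨n, by exact_mod_cast hn, ?_⟩
    rw [beattySeq, Int.cast_natCast, ← Int.natCast_floor_eq_floor (by positivity), hnj]

lemma xor_floor_mul_phi_floor_mul_phi_add_one {j : ℕ} (hj : 0 < j) :
    Xor (∃ n : ℕ, 0 < n ∧ ⌊n * phi⌋₊ = j) (∃ n : ℕ, 0 < n ∧ ⌊n * (phi + 1)⌋₊ = j) := by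
  have hmem : (j : ℤ) ∈ {n : ℤ | 0 < n} := by simpa using hj
  rwa [← Irrational.beattySeq_symmDiff_beattySeq_pos phi_holderConjugate
    Real.goldenRatio_irrational, Set.mem_symmDiff, mem_beattySeq_pos_iff phi_pos.le,
    mem_beattySeq_pos_iff (by linarith [phi_pos])] at hmem

def lowerWythoff (n : ℕ) : ℕ := ⌊phi * n⌋₊

@[simp]
lemma lowerWythoff_zero : lowerWythoff 0 = 0 := by simp [lowerWythoff]

lemma lowerWythoff_strictMono : StrictMono lowerWythoff := by
  refine strictMono_nat_of_lt_succ fun n ↦ ?_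
  calc lowerWythoff n < ⌊phi * n + 1⌋₊ := by
        rw [Nat.floor_add_one (mul_nonneg phi_pos.le n.cast_nonneg)]; exact Nat.lt_succ_self _
    _ ≤ lowerWythoff (n + 1) := by
        refine Nat.floor_le_floor ?_
        rw [Nat.cast_succ, mul_add_one]
        linarith [one_lt_phi]

lemma floor_mul_phi (n : ℕ) : ⌊n * phi⌋₊ = lowerWythoff n := by rw [lowerWythoff, mul_comm]

lemma floor_mul_phi_add_one (n : ℕ) : ⌊n * (phi + 1)⌋₊ = lowerWythoff n + n := by
  rw [mul_add_one, Nat.floor_add_natCast (mul_nonneg n.cast_nonneg phi_pos.le), floor_mul_phi]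

lemma lowerWythoff_eq_lowerWythoff_add_iff {n m : ℕ} :
    lowerWythoff n = lowerWythoff m + m ↔ n = 0 ∧ m = 0 := by
  refine ⟨fun h ↦ ?_, by rintro ⟨rfl, rfl⟩; simp⟩
  obtain rfl | hn := n.eq_zero_or_pos
  · simp only [lowerWythoff_zero] at h
    omega
  obtain rfl | hm := m.eq_zero_or_pos
  · simp only [lowerWythoff_zero, add_zero] at h
    exact ⟨lowerWythoff_strictMono.injective (h.trans lowerWythoff_zero.symm), rfl⟩
  have hj : 0 < lowerWythoff n := lowerWythoff_zero ▸ lowerWythoff_strictMono hn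
  exact absurd ⟨m, hm, (floor_mul_phi_add_one m).trans h.symm⟩
    (xor_iff_iff_not.1 (xor_floor_mul_phi_floor_mul_phi_add_one hj) |>.1 ⟨n, hn, floor_mul_phi n⟩)

lemma exists_lowerWythoff_eq_or_lowerWythoff_add_eq (j : ℕ) :
    (∃ n, lowerWythoff n = j) ∨ ∃ n, lowerWythoff n + n = j := by
  obtain rfl | hj := j.eq_zero_or_pos
  · exact .inl ⟨0, lowerWythoff_zero⟩
  obtain ⟨n, -, hn⟩ | ⟨n, -, hn⟩ := (xor_floor_mul_phi_floor_mul_phi_add_one hj).or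
  · exact .inl ⟨n, (floor_mul_phi n).symm.trans hn⟩
  · exact .inr ⟨n, (floor_mul_phi_add_one n).symm.trans hn⟩

theorem RPPos_iff_mem_of_kernel {S : Set (ℕ × ℕ)} (hindep : ∀ p ∈ S, ∀ q ∈ S, ¬ RMove p q)
    (habsorb : ∀ p ∉ S, ∃ q ∈ S, RMove p q) (p : ℕ × ℕ) : RPPos p ↔ p ∈ S := by
  rw [RPPos]
  constructor
  · intro hP
    by_contra hp
    obtain ⟨q, hq, hpq⟩ := habsorb p hp
    exact hP q hpq ((RPPos_iff_mem_of_kernel hindep habsorb q).2 hq)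
  · intro hp q hpq hq
    exact hindep p hp q ((RPPos_iff_mem_of_kernel hindep habsorb q).1 hq) hpq
termination_by p.1 + p.2
decreasing_by all_goals exact hpq.sum_lt

lemma RMove.of_lt_max {p : ℕ × ℕ} {t : ℕ} (ht : t < max p.1 p.2) :
    RMove p (min p.1 p.2, t) :=
  .inl ⟨t, ht, rfl⟩

lemma RMove.of_le_min {p : ℕ × ℕ} {k : ℕ} (hk0 : 0 < k) (hk : k ≤ min p.1 p.2) :
    RMove p (min p.1 p.2 - k, max p.1 p.2 - k) :=
  .inr ⟨k, hk0, hk, by simp only [sortPair, Prod.mk.injEq]; omega⟩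

def wythoffPositions : Set (ℕ × ℕ) := {p | ∃ n, sortPair p = (lowerWythoff n, lowerWythoff n + n)}

lemma not_RMove_of_mem_wythoffPositions {p q : ℕ × ℕ} (hp : p ∈ wythoffPositions)
    (hq : q ∈ wythoffPositions) : ¬ RMove p q := by
  obtain ⟨n, hp⟩ := hp
  obtain ⟨m, hq⟩ := hq
  simp only [sortPair, Prod.mk.injEq] at hp hq
  rintro (⟨t, ht, hqt⟩ | ⟨k, hk0, hk, hqk⟩)
  · simp only [sortPair, Prod.mk.injEq, hp.1, hq.1, hq.2] at hqt
    rcases le_total (lowerWythoff n) t with hnt | htn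
    · obtain rfl : m = n := lowerWythoff_strictMono.injective (by rw [hqt.1, min_eq_left hnt])
      omega
    · obtain ⟨rfl, rfl⟩ := lowerWythoff_eq_lowerWythoff_add_iff.1 (by rw [hqt.2, max_eq_left htn])
      simp only [hp.2, lowerWythoff_zero, add_zero] at ht
      exact Nat.not_lt_zero t ht
  · simp only [sortPair, Prod.mk.injEq, hp.1, hp.2, hq.1, hq.2] at hqk
    obtain rfl : m = n := by omega
    omega

lemma exists_RMove_mem_wythoffPositions {p : ℕ × ℕ} (hp : p ∉ wythoffPositions) :
    ∃ q ∈ wythoffPositions, RMove p q := by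
  set x := min p.1 p.2
  set d := max p.1 p.2 - x
  have hxy : x + d = max p.1 p.2 := by omega
  rcases lt_trichotomy x (lowerWythoff d) with hlt | heq | hgt
  · have hd : 0 < d := Nat.pos_of_ne_zero fun hd ↦ by simp [hd] at hlt
    obtain ⟨n, hn⟩ | ⟨n, hn⟩ := exists_lowerWythoff_eq_or_lowerWythoff_add_eq x
    · have hnd : n < d := lowerWythoff_strictMono.lt_iff_lt.1 (hn ▸ hlt)
      exact ⟨_, ⟨n, by simp only [sortPair, Prod.mk.injEq]; omega⟩,
        .of_lt_max (t := x + n) (by omega)⟩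
    · exact ⟨_, ⟨n, by simp only [sortPair, Prod.mk.injEq]; omega⟩,
        .of_lt_max (t := lowerWythoff n) (by omega)⟩
  · exact absurd ⟨d, by simp only [sortPair, Prod.mk.injEq]; omega⟩ hp
  · exact ⟨_, ⟨d, by simp only [sortPair, Prod.mk.injEq]; omega⟩,
      .of_le_min (k := x - lowerWythoff d) (by omega) (by omega)⟩

/-- The P-positions of R-Wythoff are exactly the pairs
`(⌊φn⌋, ⌊φn⌋ + n)`, `n ≥ 0`, up to swapping coordinates. -/
theorem RWythoff_P_positions (a b : ℕ) :
    RPPos (a, b) ↔ ∃ n : ℕ, sortPair (a, b) = (⌊phi * n⌋₊, ⌊phi * n⌋₊ + n) :=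
  RPPos_iff_mem_of_kernel (fun _ hp _ hq ↦ not_RMove_of_mem_wythoffPositions hp hq)
    (fun _ ↦ exists_RMove_mem_wythoffPositions) (a, b)

end
end

section
/- In R-Wythoff, for every nonnegative integer a and every nonnegative integer c, there exists a nonnegative integer b such that the Sprague–Grundy value G_R(a,b) = c. -/
noncomputable section

/-! Suppose `c` is missing from row `a`. For `b > a` the larger pile can be reduced to any smaller
size, so the values `G_R(a, b)`, `b > a`, are pairwise distinct and only finitely many of them lie
below `c`. For every other `b > a` the value `c` is taken by a follower of `(a, b)`, which cannot lie
in row `a`, so it is a diagonal follower `(a - k, b - k)` with `1 ≤ k ≤ a`. By the same injectivity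
each of these finitely many rows takes the value `c` only finitely often, so the infinitely many
`b > a` would all lie in a finite set. -/

lemma mex_notMem {S : Set ℕ} (hS : S.Finite) : mex S ∉ S :=
  Nat.sInf_mem hS.infinite_compl.nonempty

lemma mem_of_lt_mex {S : Set ℕ} {c : ℕ} (h : c < mex S) : c ∈ S :=
  not_not.mp (Nat.notMem_of_lt_sInf h)

lemma grundyR_eq_mex (p : ℕ × ℕ) :
    grundyR p = mex {v | ∃ q, ∃ _ : RMove p q, grundyR q = v} := by
  rw [grundyR]

lemma finite_grundyR_followers (p : ℕ × ℕ) :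
    {v | ∃ q, ∃ _ : RMove p q, grundyR q = v}.Finite := by
  refine (((Set.finite_Iio (p.1 + p.2)).prod (Set.finite_Iio (p.1 + p.2))).image grundyR).subset ?_
  rintro v ⟨q, hq, rfl⟩
  have := hq.sum_lt
  exact ⟨q, ⟨by simp only [Set.mem_Iio]; omega, by simp only [Set.mem_Iio]; omega⟩, rfl⟩

lemma grundyR_ne_of_RMove {p q : ℕ × ℕ} (h : RMove p q) : grundyR p ≠ grundyR q := by
  intro hpq
  rw [grundyR_eq_mex p] at hpq
  exact mex_notMem (finite_grundyR_followers p) (hpq ▸ ⟨q, h, rfl⟩)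

lemma exists_RMove_grundyR_eq_of_lt {p : ℕ × ℕ} {c : ℕ} (h : c < grundyR p) :
    ∃ q, RMove p q ∧ grundyR q = c := by
  rw [grundyR_eq_mex] at h
  obtain ⟨q, hq, hqc⟩ := mem_of_lt_mex h
  exact ⟨q, hq, hqc⟩

lemma RMove_sortPair_iff (p q : ℕ × ℕ) : RMove (sortPair p) q ↔ RMove p q := by
  simp only [RMove, sortPair, min_eq_left min_le_max, max_eq_right min_le_max]

lemma grundyR_sortPair (p : ℕ × ℕ) : grundyR (sortPair p) = grundyR p := by
  rw [grundyR_eq_mex, grundyR_eq_mex]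
  simp only [RMove_sortPair_iff]

lemma grundyR_eq_of_sortPair_eq {p q : ℕ × ℕ} (h : sortPair p = sortPair q) :
    grundyR p = grundyR q := by
  rw [← grundyR_sortPair p, h, grundyR_sortPair]

lemma RMove_row {r b t : ℕ} (hrb : r < b) (htb : t < b) : RMove (r, b) (r, t) :=
  Or.inl ⟨t, by simpa [max_eq_right hrb.le] using htb, by simp [min_eq_left hrb.le]⟩

lemma injOn_grundyR_row (r : ℕ) : Set.InjOn (fun y => grundyR (r, y)) (Set.Ioi r) := by
  intro y hy y' hy' h
  by_contra hne
  rcases Nat.lt_or_gt_of_ne hne with hlt | hgt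
  · exact grundyR_ne_of_RMove (RMove_row hy' hlt) h.symm
  · exact grundyR_ne_of_RMove (RMove_row hy hgt) h

lemma finite_grundyR_row_preimage (r : ℕ) {s : Set ℕ} (hs : s.Finite) :
    ((fun y => grundyR (r, y)) ⁻¹' s).Finite := by
  have hbeyond : ((fun y => grundyR (r, y)) ⁻¹' s ∩ Set.Ioi r).Finite :=
    (hs.subset (Set.image_subset_iff.2 Set.inter_subset_left)).of_finite_image
      ((injOn_grundyR_row r).mono Set.inter_subset_right)
  refine ((Set.finite_Iic r).union hbeyond).subset fun y hy => ?_
  exact (le_or_gt y r).imp id fun hry => ⟨hy, hry⟩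

lemma exists_diagonal_follower_grundyR_eq {a b c : ℕ} (hrow : ∀ t, grundyR (a, t) ≠ c)
    (hab : a < b) (hc : c < grundyR (a, b)) :
    ∃ k ∈ Set.Icc 1 a, grundyR (a - k, b - k) = c := by
  obtain ⟨q, hq, rfl⟩ := exists_RMove_grundyR_eq_of_lt hc
  have hmin : min a b = a := min_eq_left hab.le
  have hmax : max a b = b := max_eq_right hab.le
  rcases hq with ⟨t, -, hs⟩ | ⟨k, hk0, hka, hs⟩
  · rw [hmin] at hs
    exact absurd (grundyR_eq_of_sortPair_eq hs).symm (hrow t)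
  · rw [hmin, hmax] at hs
    rw [hmin] at hka
    exact ⟨k, ⟨hk0, hka⟩, by rw [← grundyR_sortPair q, hs]⟩

/-- Every Sprague–Grundy value occurs in every row of R-Wythoff. -/
theorem RWythoff_row (a c : ℕ) : ∃ b : ℕ, grundyR (a, b) = c := by
  by_contra! hrow
  have hcover : Set.Ioi a ⊆ (fun y => grundyR (a, y)) ⁻¹' Set.Iio c ∪
      ⋃ k ∈ Set.Icc 1 a, (· + k) '' ((fun y => grundyR (a - k, y)) ⁻¹' {c}) := by
    intro b hab
    rcases Nat.lt_or_gt_of_ne (hrow b) with hlt | hgt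
    · exact Or.inl hlt
    · obtain ⟨k, hk, hkc⟩ := exists_diagonal_follower_grundyR_eq hrow hab hgt
      have hkb : b - k + k = b := Nat.sub_add_cancel (hk.2.trans (le_of_lt hab))
      exact Or.inr (Set.mem_biUnion hk ⟨b - k, hkc, hkb⟩)
  have hfinite := (finite_grundyR_row_preimage a (Set.finite_Iio c)).union
    ((Set.finite_Icc 1 a).biUnion fun k _ =>
      (finite_grundyR_row_preimage (a - k) (Set.finite_singleton c)).image (· + k))
  exact Set.Ioi_infinite a (hfinite.subset hcover)

end
end

section
/- In E-Wythoff, for all nonnegative integers a and c there exists a unique nonnegative integer b such that G_E(a, b) = c. -/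
noncomputable section

/-- Moves of E-Wythoff (positions are unordered pairs of pile sizes): remove a
positive number of tokens from one pile, an equal positive number from both
piles, or `k` tokens from the smaller pile and `l` from the larger pile where
`k > l ≥ 0`. -/
def EMove (p q : ℕ × ℕ) : Prop :=
  (∃ t < max p.1 p.2, sortPair q = sortPair (min p.1 p.2, t)) ∨
  (∃ t < min p.1 p.2, sortPair q = sortPair (t, max p.1 p.2)) ∨
  (∃ k, 0 < k ∧ k ≤ min p.1 p.2 ∧ sortPair q = (min p.1 p.2 - k, max p.1 p.2 - k)) ∨
  (∃ k l, l < k ∧ k ≤ min p.1 p.2 ∧ sortPair q = sortPair (min p.1 p.2 - k, max p.1 p.2 - l))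

lemma EMove.sum_lt {p q : ℕ × ℕ} (h : EMove p q) : q.1 + q.2 < p.1 + p.2 := by
  rcases h with ⟨t, ht, hq⟩ | ⟨t, ht, hq⟩ | ⟨k, hk0, hk, hq⟩ | ⟨k, l, hlk, hk, hq⟩ <;>
  · simp only [sortPair, Prod.mk.injEq] at hq
    omega

/-- Sprague–Grundy function of E-Wythoff. -/
noncomputable def grundyE : ℕ × ℕ → ℕ
  | p => mex {v | ∃ q, ∃ _ : EMove p q, grundyE q = v}
termination_by p => p.1 + p.2
decreasing_by exact EMove.sum_lt (by assumption)

/-- P-positions of E-Wythoff. -/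
def EPPos : ℕ × ℕ → Prop
  | p => ∀ q, EMove p q → ¬ EPPos q
termination_by p => p.1 + p.2
decreasing_by exact EMove.sum_lt (by assumption)

lemma grundyE_eq (p : ℕ × ℕ) : grundyE p = mex {v | ∃ q, ∃ _ : EMove p q, grundyE q = v} := by
  rw [grundyE]

lemma emove_symm (p q : ℕ × ℕ) : EMove p q ↔ EMove p.swap q := by
  unfold EMove
  rw [show p.swap.1 = p.2 from rfl, show p.swap.2 = p.1 from rfl, min_comm p.2 p.1, max_comm p.2 p.1]

lemma followers_finite (p : ℕ × ℕ) : {v | ∃ q, ∃ _ : EMove p q, grundyE q = v}.Finite := by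
  have h1 : {q : ℕ × ℕ | q.1 + q.2 < p.1 + p.2}.Finite := by
    apply Set.Finite.subset (Set.finite_Iio (p.1+p.2) |>.prod (Set.finite_Iio (p.1+p.2)))
    intro q hq
    simp only [Set.mem_setOf_eq] at hq
    constructor <;> simp [Set.mem_Iio] <;> omega
  apply Set.Finite.subset (h1.image grundyE)
  rintro v ⟨q, hm, rfl⟩
  exact ⟨q, hm.sum_lt, rfl⟩

lemma grundyE_notMem (p : ℕ × ℕ) : grundyE p ∉ {v | ∃ q, ∃ _ : EMove p q, grundyE q = v} := by
  rw [grundyE_eq]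
  have := (followers_finite p).infinite_compl.nonempty
  exact Nat.sInf_mem this

lemma mem_of_lt_grundyE {p : ℕ × ℕ} {c : ℕ} (h : c < grundyE p) :
    c ∈ {v | ∃ q, ∃ _ : EMove p q, grundyE q = v} := by
  rw [grundyE_eq] at h
  by_contra hc
  exact Nat.notMem_of_lt_sInf h hc


lemma grundyE_symm (p : ℕ × ℕ) : grundyE p = grundyE p.swap := by
  rw [grundyE_eq, grundyE_eq]
  congr 1
  ext v
  constructor
  · rintro ⟨q, hm, rfl⟩; exact ⟨q, (emove_symm p q).mp hm, rfl⟩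
  · rintro ⟨q, hm, rfl⟩; exact ⟨q, (emove_symm p q).mpr hm, rfl⟩

lemma grundyE_sortPair (p : ℕ × ℕ) : grundyE (sortPair p) = grundyE p := by
  rcases le_or_gt p.1 p.2 with h | h
  · have : sortPair p = p := by simp [sortPair, Prod.ext_iff]; omega
    rw [this]
  · have : sortPair p = p.swap := by simp [sortPair, Prod.ext_iff]; omega
    rw [this, ← grundyE_symm]

lemma row_move {a b b' : ℕ} (h : b' < b) : EMove (a, b) (a, b') := by
  rcases le_or_gt a b with hab | hab
  · left
    refine ⟨b', by simp; omega, ?_⟩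
    simp [sortPair, Prod.ext_iff]; omega
  · right; left
    refine ⟨b', by simp; omega, ?_⟩
    simp [sortPair, Prod.ext_iff]; omega

lemma row_inj {a b b' : ℕ} (h : grundyE (a, b) = grundyE (a, b')) : b = b' := by
  rcases lt_trichotomy b b' with hl | he | hl
  · exact absurd ⟨(a, b), row_move hl, h⟩ (grundyE_notMem (a, b'))
  · exact he
  · exact absurd ⟨(a, b'), row_move hl, h.symm⟩ (grundyE_notMem (a, b))

lemma key_step {a c b : ℕ} (hab : a ≤ b) (hgt : c < grundyE (a, b))
    (hrow : ∀ t, grundyE (a, t) ≠ c) :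
    ∃ s m, s < a ∧ b - a ≤ m ∧ m ≤ b ∧ grundyE (s, m) = c := by
  obtain ⟨q, hm, hq⟩ := mem_of_lt_grundyE hgt
  have hmin : min (a, b).1 (a, b).2 = a := by simp; omega
  have hmax : max (a, b).1 (a, b).2 = b := by simp; omega
  have hval : grundyE (sortPair q) = c := by rw [grundyE_sortPair]; exact hq
  rcases hm with ⟨t, ht, hsq⟩ | ⟨t, ht, hsq⟩ | ⟨k, hk0, hk, hsq⟩ | ⟨k, l, hlk, hk, hsq⟩
  · exfalso
    rw [hmin] at hsq
    apply hrow t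
    rw [← grundyE_sortPair (a, t), ← hsq, hval]
  · rw [hmin] at ht; rw [hmax] at hsq
    refine ⟨t, b, ht, ?_, le_refl b, ?_⟩
    · omega
    · rw [← hval, hsq, grundyE_sortPair]
  · rw [hmin] at hk; rw [hmin, hmax] at hsq
    refine ⟨a - k, b - k, by omega, by omega, by omega, ?_⟩
    rw [← hval, hsq]
  · rw [hmin] at hk; rw [hmin, hmax] at hsq
    refine ⟨a - k, b - l, by omega, by omega, by omega, ?_⟩
    rw [← hval, hsq]
    have : sortPair (a - k, b - l) = (a - k, b - l) := by
      simp [sortPair, Prod.ext_iff]; omega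
    rw [this]

theorem EWythoff_row_aux (a c : ℕ) : ∃! b : ℕ, grundyE (a, b) = c := by
  have hex : ∃ b, grundyE (a, b) = c := by
    by_contra hc
    push_neg at hc
    -- exceptional set is finite
    have hinj : Function.Injective (fun b => grundyE (a, b)) := fun _ _ h => row_inj h
    have hE : ((fun b => grundyE (a, b)) ⁻¹' (Set.Iio c)).Finite :=
      Set.Finite.preimage (hinj.injOn) (Set.finite_Iio c)
    obtain ⟨B, hB⟩ := hE.bddAbove
    set base := B + 1 + a with hbase
    have key : ∀ i : Fin (a + 1), ∃ s m, s < a ∧ (base + i * (a+1)) - a ≤ m ∧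
        m ≤ base + i * (a+1) ∧ grundyE (s, m) = c := by
      intro i
      set b := base + i * (a+1) with hb
      have h1 : a ≤ b := by omega
      have h2 : c < grundyE (a, b) := by
        rcases lt_trichotomy (grundyE (a, b)) c with h | h | h
        · exfalso
          have : b ∈ (fun b => grundyE (a, b)) ⁻¹' (Set.Iio c) := h
          have := hB this
          omega
        · exact absurd h (hc b)
        · exact h
      exact key_step h1 h2 hc
    choose s m hs h1 h2 hv using key
    have : ¬ Function.Injective (fun i : Fin (a+1) => (⟨s i, hs i⟩ : Fin a)) := by
      intro hinj'
      have := Fintype.card_le_of_injective _ hinj'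
      simp at this
    apply this
    intro i j hij
    simp only [Fin.mk.injEq] at hij
    -- s i = s j, then m i = m j by row_inj, then i = j by interval disjointness
    have hmm : m i = m j := by
      apply row_inj (a := s i)
      rw [hv i, hij, hv j]
    by_contra hne
    have hne' : (i : ℕ) ≠ (j : ℕ) := fun h => hne (Fin.ext h)
    have hi2 := h2 i; have hj1 := h1 j; have hi1 := h1 i; have hj2 := h2 j
    rcases Nat.lt_or_ge (i : ℕ) (j : ℕ) with h | h
    · have hmul : ((i : ℕ)) * (a + 1) + (a + 1) ≤ (j : ℕ) * (a + 1) := by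
        have := Nat.mul_le_mul_right (a + 1) h
        calc (i:ℕ) * (a+1) + (a+1) = ((i:ℕ)+1) * (a+1) := by ring
        _ ≤ (j:ℕ) * (a+1) := Nat.mul_le_mul_right _ h
      omega
    · have hlt : (j : ℕ) < (i : ℕ) := by omega
      have hmul : ((j : ℕ)) * (a + 1) + (a + 1) ≤ (i : ℕ) * (a + 1) := by
        calc (j:ℕ) * (a+1) + (a+1) = ((j:ℕ)+1) * (a+1) := by ring
        _ ≤ (i:ℕ) * (a+1) := Nat.mul_le_mul_right _ hlt
      omega
  obtain ⟨b, hb⟩ := hex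
  exact ⟨b, hb, fun b' hb' => row_inj (hb'.trans hb.symm)⟩

/-- Every Sprague–Grundy value occurs exactly once in each row of E-Wythoff. -/
theorem EWythoff_row (a c : ℕ) : ∃! b : ℕ, grundyE (a, b) = c := EWythoff_row_aux a c

end
end
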